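/- K4 equals the intersection over all n ≥ 0 of the logics K4C_n. -/

import Mathlib

/-!
A theorem of K4Cₙ holds on every transitive frame validating Cₙ, and a transitive frame with
`n` points validates Cₙ: a failure of Cₙ at `x` would produce `n + 1` successors of `x`,
satisfying `φ₀, …, φₙ` respectively, which the disjointness formula `Dₙ` forces to be distinct.
Conversely K4 has the finite model property: a non-theorem `φ` fails in the transitive
filtration, through the subformulas of `φ`, of the canonical model of K4, whose worlds are the
finitely many K4-consistent sets of literals over those subformulas. So a non-theorem of K4 is
refuted on a frame validating K4Cₙ with `n` its number of points.
-/

/-- Modal formulas: variables, ⊤, ¬, ∧, □. -/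
inductive Fml : Type
  | var : ℕ → Fml
  | top : Fml
  | neg : Fml → Fml
  | and : Fml → Fml → Fml
  | box : Fml → Fml
deriving DecidableEq

namespace Fml
/-- Material implication, defined from ¬ and ∧. -/
def imp (φ ψ : Fml) : Fml := .neg (.and φ (.neg ψ))
/-- Disjunction. -/
def or (φ ψ : Fml) : Fml := .neg (.and (.neg φ) (.neg ψ))
/-- ◇φ := ¬□¬φ. -/
def dia (φ : Fml) : Fml := .neg (.box (.neg φ))
/-- □*φ := φ ∧ □φ. -/
def boxs (φ : Fml) : Fml := .and φ (.box φ)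
/-- ◇*φ := φ ∨ ◇φ. -/
def dias (φ : Fml) : Fml := Fml.or φ (dia φ)
end Fml

/-- Kripke satisfaction. -/
def sat {W : Type} (R : W → W → Prop) (V : ℕ → Set W) : W → Fml → Prop
  | x, .var p => x ∈ V p
  | _, .top => True
  | x, .neg φ => ¬ sat R V x φ
  | x, .and φ ψ => sat R V x φ ∧ sat R V x ψ
  | x, .box φ => ∀ y, R x y → sat R V y φ

/-- P_n(φ0; φ1,...,φn): P_0(φ0) = ◇φ0, P_n(φ0,φ1,...,φn) = ◇(φ1 ∧ P_{n-1}(φ0,φ2,...,φn)). -/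
def Pfml (φ0 : Fml) : List Fml → Fml
  | [] => φ0.dia
  | ψ :: rest => (Fml.and ψ (Pfml φ0 rest)).dia

/-- Conjunction of ¬(φ ∧ ψ) for ψ in the list. -/
def conjNeg (φ : Fml) : List Fml → Fml
  | [] => .top
  | ψ :: rest => .and (.neg (.and φ ψ)) (conjNeg φ rest)

/-- D_n: pairwise disjointness conjunction ⋀_{i<j} ¬(φ_i ∧ φ_j). -/
def Dfml : List Fml → Fml
  | [] => .top
  | φ :: rest => .and (conjNeg φ rest) (Dfml rest)

/-- The scheme C_n instance on φ0,φ1,...,φn (φs = [φ1,...,φn]). -/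
def Cfml (φ0 : Fml) (φs : List Fml) : Fml :=
  ((Dfml (φ0 :: φs)).boxs).imp ((φ0.dia).imp ((Fml.and φ0 (Fml.neg (Pfml φ0 φs))).dia))

/-- The scheme C_n* instance: as C_n but with ◇* in the consequent. -/
def CfmlStar (φ0 : Fml) (φs : List Fml) : Fml :=
  ((Dfml (φ0 :: φs)).boxs).imp ((φ0.dia).imp ((Fml.and φ0 (Fml.neg (Pfml φ0 φs))).dias))

/-- An ascending R-chain. -/
def AscChain {W : Type} (R : W → W → Prop) (x : ℕ → W) : Prop := ∀ m, R (x m) (x (m+1))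

/-- A strictly ascending R-chain. -/
def StrictAscChain {W : Type} (R : W → W → Prop) (x : ℕ → W) : Prop :=
  AscChain R x ∧ ∀ m, ¬ R (x (m+1)) (x m)

/-- The R-cluster of x. -/
def cluster {W : Type} (R : W → W → Prop) (x : W) : Set W := {y | x = y ∨ (R x y ∧ R y x)}

/-- The frame has a cycle of length k (k ≥ 1): k distinct points x_0 R x_1 R ... R x_{k-1} R x_0. -/
def HasCycle {W : Type} (R : W → W → Prop) (k : ℕ) : Prop :=
  1 ≤ k ∧ ∃ x : ℕ → W, (∀ i j, i < k → j < k → x i = x j → i = j) ∧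
    ∀ i < k, R (x i) (x ((i+1) % k))

/-- Circumference at most n: every cycle has length ≤ n. -/
def CircumLE {W : Type} (R : W → W → Prop) (n : ℕ) : Prop := ∀ k, HasCycle R k → k ≤ n

/-- The frame (W,R) validates the scheme C_n. -/
def ValidatesCn {W : Type} (R : W → W → Prop) (n : ℕ) : Prop :=
  ∀ (V : ℕ → Set W) (x : W) (φ0 : Fml) (φs : List Fml), φs.length = n →
    sat R V x (Cfml φ0 φs)

/-- A Boolean valuation on formulas (box-formulas and variables as atoms). -/
def BoolEval (w : Fml → Bool) : Prop :=
  w .top = true ∧ (∀ φ, w (.neg φ) = !w φ) ∧ (∀ φ ψ, w (.and φ ψ) = (w φ && w ψ))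

/-- Propositional tautologies. -/
def Tautology (φ : Fml) : Prop := ∀ w, BoolEval w → w φ = true

/-- Theorems of the smallest normal modal logic containing the axiom set Ax. -/
inductive Prov (Ax : Set Fml) : Fml → Prop
  | taut {φ} : Tautology φ → Prov Ax φ
  | kax (φ ψ) : Prov Ax ((Fml.box (φ.imp ψ)).imp ((Fml.box φ).imp (Fml.box ψ)))
  | ax {φ} : φ ∈ Ax → Prov Ax φ
  | mp {φ ψ} : Prov Ax (φ.imp ψ) → Prov Ax φ → Prov Ax ψ
  | nec {φ} : Prov Ax φ → Prov Ax (.box φ)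

/-- All instances of the transitivity scheme 4. -/
def Ax4 : Set Fml := {χ | ∃ φ, χ = (Fml.box φ).imp (Fml.box (Fml.box φ))}

/-- Axioms of K4C_n: scheme 4 together with all instances of scheme C_n. -/
def AxK4C (n : ℕ) : Set Fml :=
  Ax4 ∪ {χ | ∃ (φ0 : Fml) (φs : List Fml), φs.length = n ∧ χ = Cfml φ0 φs}


open Fml

section Satisfaction

variable {W : Type} {R : W → W → Prop} {V : ℕ → Set W} {x : W} {φ ψ : Fml}

@[simp] lemma sat_neg : sat R V x (.neg φ) ↔ ¬ sat R V x φ := Iff.rfl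

@[simp] lemma sat_and : sat R V x (.and φ ψ) ↔ sat R V x φ ∧ sat R V x ψ := Iff.rfl

@[simp] lemma sat_box : sat R V x (.box φ) ↔ ∀ y, R x y → sat R V y φ := Iff.rfl

@[simp] lemma sat_imp : sat R V x (φ.imp ψ) ↔ (sat R V x φ → sat R V x ψ) := by
  simp [Fml.imp]

@[simp] lemma sat_dia : sat R V x φ.dia ↔ ∃ y, R x y ∧ sat R V y φ := by
  simp [Fml.dia]

@[simp] lemma sat_boxs : sat R V x φ.boxs ↔ sat R V x φ ∧ ∀ y, R x y → sat R V y φ := Iff.rfl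

lemma sat_conjNeg {l : List Fml} :
    sat R V x (conjNeg φ l) ↔ ∀ ψ ∈ l, ¬ (sat R V x φ ∧ sat R V x ψ) := by
  induction l with
  | nil => simp [conjNeg, sat]
  | cons ψ l ih => simp [conjNeg, ih]

lemma sat_Dfml {l : List Fml} :
    sat R V x (Dfml l) ↔ l.Pairwise fun φ ψ => ¬ (sat R V x φ ∧ sat R V x ψ) := by
  induction l with
  | nil => simp [Dfml, sat]
  | cons φ l ih => simp [Dfml, sat_conjNeg, ih]

lemma exists_forall₂_of_sat_Pfml [IsTrans W R] {y : W} (hxy : R x y) {φ₀ : Fml} {l : List Fml}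
    (h : sat R V y (Pfml φ₀ l)) :
    ∃ zs : List W, List.Forall₂ (fun z ψ => R x z ∧ sat R V z ψ) zs l := by
  induction l generalizing y with
  | nil => exact ⟨[], .nil⟩
  | cons ψ l ih =>
    obtain ⟨z, hyz, hzψ, hzP⟩ := by simpa [Pfml] using h
    have hxz : R x z := _root_.trans hxy hyz
    obtain ⟨zs, hzs⟩ := ih hxz hzP
    exact ⟨z :: zs, .cons ⟨hxz, hzψ⟩ hzs⟩

end Satisfaction

lemma List.Forall₂.nodup {α β : Type*} {S : α → β → Prop} {as : List α} {bs : List β}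
    (h : List.Forall₂ S as bs) (hdisj : ∀ a, bs.Pairwise fun b b' => ¬ (S a b ∧ S a b')) :
    as.Nodup := by
  induction h with
  | nil => exact List.nodup_nil
  | @cons a b as bs hab hrest ih =>
    have hmem : ∀ a' ∈ as, ∃ b' ∈ bs, S a' b' := by
      clear ih hdisj
      induction hrest with
      | nil => simp
      | cons h _ ih =>
        simp only [List.mem_cons, forall_eq_or_imp, exists_eq_or_imp]
        exact ⟨.inl h, fun a ha => .inr (ih a ha)⟩
    refine List.nodup_cons.2 ⟨fun ha => ?_, ih fun a' => (List.pairwise_cons.1 (hdisj a')).2⟩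
    obtain ⟨b', hb', hab'⟩ := hmem a ha
    exact (List.pairwise_cons.1 (hdisj a)).1 b' hb' ⟨hab, hab'⟩

lemma validatesCn_card {W : Type} [Fintype W] {R : W → W → Prop} [IsTrans W R] :
    ValidatesCn R (Fintype.card W) := by
  intro V x φ₀ φs hlen
  simp only [Cfml, sat_imp, sat_boxs, sat_dia, sat_and, sat_neg]
  rintro ⟨-, hD⟩ ⟨y, hxy, hy⟩
  by_contra! hP
  -- `y` and the chain below it are `card W + 1` successors of `x`, kept apart by `D` at each
  obtain ⟨zs, hzs⟩ := exists_forall₂_of_sat_Pfml hxy (hP y hxy hy)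
  have hchain : List.Forall₂ (fun z ψ => R x z ∧ sat R V z ψ) (y :: zs) (φ₀ :: φs) :=
    .cons ⟨hxy, hy⟩ hzs
  have hnodup := hchain.nodup fun z => by
    by_cases hxz : R x z
    · exact (sat_Dfml.1 (hD z hxz)).imp fun h ⟨⟨_, h₁⟩, _, h₂⟩ => h ⟨h₁, h₂⟩
    · exact List.pairwise_of_forall fun _ _ ⟨⟨h, _⟩, _⟩ => hxz h
  have := hnodup.length_le_card
  simp only [hchain.length_eq, List.length_cons] at this
  omega

lemma sat_of_tautology {W : Type} {R : W → W → Prop} {V : ℕ → Set W} {x : W} {φ : Fml}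
    (h : Tautology φ) : sat R V x φ := by
  classical
  have hw : BoolEval fun ψ => decide (sat R V x ψ) :=
    ⟨decide_eq_true trivial, fun ψ => by simp, fun ψ χ => by simp⟩
  simpa using h _ hw

theorem Prov.sound {W : Type} {R : W → W → Prop} [IsTrans W R] {n : ℕ} (hC : ValidatesCn R n)
    {φ : Fml} (h : Prov (AxK4C n) φ) (V : ℕ → Set W) (x : W) : sat R V x φ := by
  induction h generalizing x with
  | taut ht => exact sat_of_tautology ht
  | kax => simp only [sat_imp, sat_box]; exact fun h₁ h₂ y hy => h₁ y hy (h₂ y hy)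
  | ax hm =>
    rcases hm with ⟨ψ, rfl⟩ | ⟨φ₀, φs, hlen, rfl⟩
    · simp only [sat_imp, sat_box]
      exact fun h y hy z hz => h z (_root_.trans hy hz)
    · exact hC V x φ₀ φs hlen
  | mp _ _ ih₁ ih₂ => exact sat_imp.1 (ih₁ x) (ih₂ x)
  | nec _ ih => exact fun y _ => ih y

def Fml.conj : List Fml → Fml
  | [] => .top
  | φ :: l => .and φ (conj l)

namespace BoolEval

variable {w : Fml → Bool} {φ ψ : Fml}

lemma neg_iff (hw : BoolEval w) : w (.neg φ) = true ↔ ¬ w φ = true := by simp [hw.2.1]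

lemma and_iff (hw : BoolEval w) : w (.and φ ψ) = true ↔ w φ = true ∧ w ψ = true := by
  simp [hw.2.2]

lemma imp_iff (hw : BoolEval w) : w (φ.imp ψ) = true ↔ (w φ = true → w ψ = true) := by
  simp only [Fml.imp, hw.neg_iff, hw.and_iff]; tauto

lemma conj_iff (hw : BoolEval w) {l : List Fml} : w (conj l) = true ↔ ∀ φ ∈ l, w φ = true := by
  induction l with
  | nil => simp [conj, hw.1]
  | cons φ l ih => simp [conj, hw.and_iff, ih]

end BoolEval

namespace Prov

variable {Ax : Set Fml} {φ ψ χ θ : Fml}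

lemma mono {Ax' : Set Fml} (hsub : Ax ⊆ Ax') (h : Prov Ax φ) : Prov Ax' φ := by
  induction h with
  | taut ht => exact taut ht
  | kax φ ψ => exact kax φ ψ
  | ax hm => exact ax (hsub hm)
  | mp _ _ ih₁ ih₂ => exact mp ih₁ ih₂
  | nec _ ih => exact nec ih

lemma taut_mp (ht : Tautology (φ.imp ψ)) (h : Prov Ax φ) : Prov Ax ψ := mp (taut ht) h

lemma taut_mp₂ (ht : Tautology (φ.imp (ψ.imp χ))) (h₁ : Prov Ax φ) (h₂ : Prov Ax ψ) :
    Prov Ax χ :=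
  mp (taut_mp ht h₁) h₂

lemma taut_mp₃ (ht : Tautology (φ.imp (ψ.imp (χ.imp θ)))) (h₁ : Prov Ax φ) (h₂ : Prov Ax ψ)
    (h₃ : Prov Ax χ) : Prov Ax θ :=
  mp (taut_mp₂ ht h₁ h₂) h₃

lemma box_imp_box (h : Prov Ax (φ.imp ψ)) : Prov Ax ((box φ).imp (box ψ)) :=
  mp (kax φ ψ) (nec h)

lemma box_imp_box₂ (h : Prov Ax (φ.imp (ψ.imp χ))) :
    Prov Ax ((box φ).imp ((box ψ).imp (box χ))) :=
  taut_mp₂ (fun w hw => by simp only [hw.imp_iff]; tauto) (box_imp_box h) (kax ψ χ)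

lemma conj {l : List Fml} (h : ∀ φ ∈ l, Prov Ax φ) : Prov Ax (Fml.conj l) := by
  induction l with
  | nil => exact taut fun w hw => hw.1
  | cons φ l ih =>
    refine taut_mp₂ (fun w hw => ?_) (h φ (by simp)) (ih fun ψ hψ => h ψ (by simp [hψ]))
    simp only [Fml.conj, hw.imp_iff, hw.and_iff]; tauto

lemma box_imp_box_boxs (h4 : Ax4 ⊆ Ax) (φ : Fml) : Prov Ax ((box φ).imp (box φ.boxs)) :=
  taut_mp₂ (fun w hw => by simp only [hw.imp_iff]; tauto) (ax (h4 ⟨φ, rfl⟩))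
    (box_imp_box₂ (ψ := box φ)
      (taut fun w hw => by simp only [boxs, hw.imp_iff, hw.and_iff]; tauto))

lemma conj_map_box_imp_box_conj_map_boxs (h4 : Ax4 ⊆ Ax) (l : List Fml) :
    Prov Ax ((Fml.conj (l.map box)).imp (box (Fml.conj (l.map boxs)))) := by
  induction l with
  | nil =>
    exact taut_mp (fun w hw => by simp only [hw.imp_iff]; tauto) (nec (taut fun w hw => hw.1))
  | cons φ l ih =>
    refine taut_mp₃ (fun w hw => ?_) (box_imp_box_boxs h4 φ) ih
      (box_imp_box₂ (φ := φ.boxs) (ψ := Fml.conj (l.map boxs)) (χ := Fml.conj ((φ :: l).map boxs))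
        (taut fun w hw => ?_))
    · simp only [List.map_cons, Fml.conj, hw.imp_iff, hw.and_iff]; tauto
    · simp only [List.map_cons, Fml.conj, hw.imp_iff, hw.and_iff]; tauto

end Prov

def Consistent (Ax : Set Fml) (φ : Fml) : Prop := ¬ Prov Ax φ.neg

namespace Consistent

variable {Ax : Set Fml} {φ ψ : Fml}

lemma exists_boolEval (h : Consistent Ax φ) : ∃ w, BoolEval w ∧ w φ = true := by
  by_contra! hw
  exact h (Prov.taut fun w hw' => hw'.neg_iff.2 (hw w hw'))

lemma of_taut_imp (ht : Tautology (φ.imp ψ)) (h : Consistent Ax φ) : Consistent Ax ψ := by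
  refine fun hψ => h (Prov.taut_mp (fun w hw => ?_) hψ)
  have := ht w hw
  simp only [hw.imp_iff, hw.neg_iff] at *
  tauto

end Consistent

def literal (s : Finset Fml) (φ : Fml) : Fml := if φ ∈ s then φ else φ.neg

def charFml (L : List Fml) (s : Finset Fml) : Fml := conj (L.map (literal s))

lemma BoolEval.charFml_iff {w : Fml → Bool} (hw : BoolEval w) {L : List Fml} {s : Finset Fml} :
    w (charFml L s) = true ↔ ∀ φ ∈ L, (w φ = true ↔ φ ∈ s) := by
  simp only [charFml, hw.conj_iff, List.forall_mem_map, literal]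
  refine forall₂_congr fun φ _ => ?_
  split_ifs with h <;> simp [h, hw.neg_iff]

lemma Consistent.exists_and_charFml {Ax : Set Fml} {φ : Fml} (L : List Fml)
    (h : Consistent Ax φ) : ∃ s ⊆ L.toFinset, Consistent Ax (φ.and (charFml L s)) := by
  by_contra! hs
  refine h (Prov.taut_mp (fun w hw => ?_) (Prov.conj (l := L.toFinset.powerset.toList.map
    fun s => (φ.and (charFml L s)).neg) ?_))
  · rw [hw.imp_iff, hw.conj_iff, hw.neg_iff]
    intro hall hφ
    have hs : L.toFinset.filter (fun ψ => w ψ = true) ∈ L.toFinset.powerset.toList := by simp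
    have := hall _ (List.mem_map_of_mem hs)
    simp only [hw.neg_iff, hw.and_iff, hw.charFml_iff] at this
    exact this ⟨hφ, fun ψ hψ => by simp [hψ]⟩
  · simpa [Consistent] using hs

def subformulas : Fml → List Fml
  | .var p => [.var p]
  | .top => [.top]
  | .neg φ => .neg φ :: subformulas φ
  | .and φ ψ => .and φ ψ :: (subformulas φ ++ subformulas ψ)
  | .box φ => .box φ :: subformulas φ

lemma mem_subformulas_self (φ : Fml) : φ ∈ subformulas φ := by
  cases φ <;> simp [subformulas]

lemma subformulas_subset_of_mem {φ ψ : Fml} (h : ψ ∈ subformulas φ) :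
    subformulas ψ ⊆ subformulas φ := by
  induction φ generalizing ψ with
  | var | top => simp_all [subformulas]
  | neg φ ih | box φ ih =>
    rcases List.mem_cons.1 h with rfl | h
    · exact List.Subset.refl _
    · exact List.Subset.trans (ih h) (List.subset_cons_self _ _)
  | and φ χ ihφ ihχ =>
    rcases List.mem_cons.1 h with rfl | h
    · exact List.Subset.refl _
    rcases List.mem_append.1 h with h | h
    · exact List.Subset.trans (ihφ h) (List.subset_cons_of_subset _ (List.subset_append_left _ _))
    · exact List.Subset.trans (ihχ h) (List.subset_cons_of_subset _ (List.subset_append_right _ _))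

def SubformulaClosed (L : List Fml) : Prop := ∀ φ ∈ L, subformulas φ ⊆ L

lemma subformulaClosed_subformulas (φ : Fml) : SubformulaClosed (subformulas φ) :=
  fun _ => subformulas_subset_of_mem

namespace SubformulaClosed

variable {L : List Fml} {φ ψ : Fml}

lemma of_neg (hL : SubformulaClosed L) (h : .neg φ ∈ L) : φ ∈ L :=
  hL _ h (by simp [subformulas, mem_subformulas_self])

lemma of_and_left (hL : SubformulaClosed L) (h : .and φ ψ ∈ L) : φ ∈ L :=
  hL _ h (by simp [subformulas, mem_subformulas_self])

lemma of_and_right (hL : SubformulaClosed L) (h : .and φ ψ ∈ L) : ψ ∈ L :=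
  hL _ h (by simp [subformulas, mem_subformulas_self])

lemma of_box (hL : SubformulaClosed L) (h : .box φ ∈ L) : φ ∈ L :=
  hL _ h (by simp [subformulas, mem_subformulas_self])

end SubformulaClosed

def Fml.unbox : Fml → Option Fml
  | .box φ => some φ
  | _ => none

lemma Fml.unbox_eq_some {φ ψ : Fml} : φ.unbox = some ψ ↔ φ = box ψ := by
  cases φ <;> simp [unbox, eq_comm]

/-- Atoms stand in for maximal consistent sets: since `L` is finite, no Lindenbaum lemma is
needed. -/
@[ext]
structure Atom (L : List Fml) where
  set : Finset Fml
  subset : set ⊆ L.toFinset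
  consistent : Consistent Ax4 (charFml L set)

namespace Atom

variable {L : List Fml}

instance : Finite (Atom L) :=
  Finite.of_injective
    (fun u : Atom L => (⟨u.set, Finset.mem_powerset.2 u.subset⟩ : L.toFinset.powerset))
    fun _ _ h => Atom.ext (congrArg Subtype.val h)

/-- The transitive filtration of the canonical relation of K4 through `L`. -/
def Rel (u v : Atom L) : Prop := ∀ φ, box φ ∈ u.set → φ ∈ v.set ∧ box φ ∈ v.set

instance : IsTrans (Atom L) Rel := ⟨fun _ _ _ huv hvt φ hφ => hvt φ (huv φ hφ).2⟩

def val (p : ℕ) : Set (Atom L) := {u | var p ∈ u.set}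

noncomputable def boxed (u : Atom L) : List Fml := u.set.toList.filterMap unbox

lemma mem_boxed {u : Atom L} {φ : Fml} : φ ∈ u.boxed ↔ box φ ∈ u.set := by
  simp [boxed, unbox_eq_some]

lemma exists_boolEval (u : Atom L) : ∃ w, BoolEval w ∧ ∀ φ ∈ L, (w φ = true ↔ φ ∈ u.set) :=
  let ⟨w, hw, hu⟩ := u.consistent.exists_boolEval
  ⟨w, hw, hw.charFml_iff.1 hu⟩

lemma exists_of_consistent {φ : Fml} (h : Consistent Ax4 φ) :
    ∃ (u : Atom L) (w : Fml → Bool), BoolEval w ∧ w φ = true ∧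
      ∀ ψ ∈ L, (w ψ = true ↔ ψ ∈ u.set) := by
  obtain ⟨s, hsL, hs⟩ := h.exists_and_charFml L
  obtain ⟨w, hw, hφs⟩ := hs.exists_boolEval
  rw [hw.and_iff, hw.charFml_iff] at hφs
  refine ⟨⟨s, hsL, hs.of_taut_imp fun w hw => ?_⟩, w, hw, hφs⟩
  simp only [hw.imp_iff, hw.and_iff]
  tauto

lemma consistent_conj_boxs_and_neg {u : Atom L} {φ : Fml} (hφL : box φ ∈ L)
    (hφ : box φ ∉ u.set) :
    Consistent Ax4 ((conj (u.boxed.map boxs)).and φ.neg) := by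
  -- otherwise `⊢ ⋀ □c → □φ` by K and 4, which refutes the characteristic formula of `u`
  intro h
  have himp : Prov Ax4 ((conj (u.boxed.map boxs)).imp φ) :=
    Prov.taut_mp (fun w hw => by simp only [hw.imp_iff, hw.neg_iff, hw.and_iff]; tauto) h
  have hbox : Prov Ax4 ((conj (u.boxed.map box)).imp (box φ)) :=
    Prov.taut_mp₂ (fun w hw => by simp only [hw.imp_iff]; tauto)
      (Prov.conj_map_box_imp_box_conj_map_boxs subset_rfl u.boxed) (Prov.box_imp_box himp)
  refine u.consistent (Prov.taut_mp (fun w hw => ?_) hbox)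
  simp only [hw.imp_iff, hw.neg_iff, hw.charFml_iff, hw.conj_iff, List.forall_mem_map]
  intro himp hu
  refine hφ ((hu _ hφL).1 (himp fun ψ hψ => ?_))
  have hψu := mem_boxed.1 hψ
  exact (hu _ (List.mem_toFinset.1 (u.subset hψu))).2 hψu

lemma exists_rel_not_mem (hL : SubformulaClosed L) {u : Atom L} {φ : Fml} (hφL : box φ ∈ L)
    (hφ : box φ ∉ u.set) : ∃ v, Rel u v ∧ φ ∉ v.set := by
  obtain ⟨v, w, hw, hwv, hv⟩ := exists_of_consistent (L := L) (consistent_conj_boxs_and_neg hφL hφ)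
  simp only [hw.and_iff, hw.neg_iff, hw.conj_iff, List.forall_mem_map, boxs] at hwv
  refine ⟨v, fun ψ hψ => ?_, fun hφv => hwv.2 ((hv φ (hL.of_box hφL)).2 hφv)⟩
  have hψL : box ψ ∈ L := List.mem_toFinset.1 (u.subset hψ)
  have hwψ := hwv.1 ψ (mem_boxed.2 hψ)
  exact ⟨(hv ψ (hL.of_box hψL)).1 hwψ.1, (hv _ hψL).1 hwψ.2⟩

lemma sat_iff_mem (hL : SubformulaClosed L) {φ : Fml} (hφ : φ ∈ L) (u : Atom L) :
    sat Rel val u φ ↔ φ ∈ u.set := by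
  induction φ generalizing u with
  | var p => rfl
  | top =>
    obtain ⟨w, hw, hu⟩ := u.exists_boolEval
    exact ⟨fun _ => (hu _ hφ).1 hw.1, fun _ => trivial⟩
  | neg φ ih =>
    obtain ⟨w, hw, hu⟩ := u.exists_boolEval
    rw [sat_neg, ih (hL.of_neg hφ), ← hu _ hφ, ← hu _ (hL.of_neg hφ), hw.neg_iff]
  | and φ ψ ihφ ihψ =>
    obtain ⟨w, hw, hu⟩ := u.exists_boolEval
    rw [sat_and, ihφ (hL.of_and_left hφ), ihψ (hL.of_and_right hφ), ← hu _ hφ,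
      ← hu _ (hL.of_and_left hφ), ← hu _ (hL.of_and_right hφ), hw.and_iff]
  | box φ ih =>
    rw [sat_box]
    refine ⟨fun h => by_contra fun hφu => ?_, fun h v huv => (ih (hL.of_box hφ) v).2 (huv φ h).1⟩
    obtain ⟨v, huv, hv⟩ := exists_rel_not_mem hL hφ hφu
    exact hv ((ih (hL.of_box hφ) v).1 (h v huv))

end Atom

theorem exists_finite_transitive_countermodel {φ : Fml} (h : ¬ Prov Ax4 φ) :
    ∃ (W : Type) (_ : Finite W) (R : W → W → Prop) (_ : IsTrans W R) (V : ℕ → Set W) (x : W),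
      ¬ sat R V x φ := by
  have hneg : Consistent Ax4 φ.neg := fun h' =>
    h (Prov.taut_mp (fun w hw => by simp only [hw.imp_iff, hw.neg_iff]; tauto) h')
  obtain ⟨u, w, hw, hwφ, hu⟩ := Atom.exists_of_consistent (L := subformulas φ) hneg
  refine ⟨Atom (subformulas φ), inferInstance, Atom.Rel, inferInstance, Atom.val, u, fun hφ => ?_⟩
  have hφu := (Atom.sat_iff_mem (subformulaClosed_subformulas φ) (mem_subformulas_self φ) u).1 hφ
  exact hw.neg_iff.1 hwφ ((hu φ (mem_subformulas_self φ)).2 hφu)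

/-- K4 is the intersection of the logics K4C_n over all n. -/
theorem stmt11 (φ : Fml) : Prov Ax4 φ ↔ ∀ n : ℕ, Prov (AxK4C n) φ := by
  refine ⟨fun h n => h.mono Set.subset_union_left, fun h => by_contra fun hφ => ?_⟩
  obtain ⟨W, _, R, _, V, x, hx⟩ := exists_finite_transitive_countermodel hφ
  have := Fintype.ofFinite W
  exact hx ((h (Fintype.card W)).sound validatesCn_card V x)
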